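/- If Chase(Σ,D) is infinite, then Chase(Σ,D) contains an infinite chain of chase edges n₀ →_{y₁} n₁ →_{y₂} n₂ →_{y₃} ⋯ between nulls. -/

import Mathlib

/- Formalization of the framework of "Chase Termination Beyond Polynomial Time":
   terms, atoms, tgds, the Datalog-first standard chase, the labelled existential
   dependency graph, path queries, propagation, saturation, ranks, and term trees. -/

namespace ChasePaper

/-- Terms built from countably many constants, variables, and nulls. -/
inductive Term : Type
  | const : ℕ → Term
  | var : ℕ → Term
  | null : ℕ → Term
  deriving DecidableEq

/-- Atoms: a predicate applied to a list of terms (the arity of the predicate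
being the length of the argument list). -/
structure Atom : Type where
  pred : ℕ
  args : List Term
  deriving DecidableEq

def Atom.vars (a : Atom) : Set ℕ := { x | Term.var x ∈ a.args }

/-- Application of a substitution (acting on variables) to a term. -/
def Term.subst (σ : ℕ → Term) : Term → Term
  | Term.var x => σ x
  | t => t

def Atom.subst (σ : ℕ → Term) (a : Atom) : Atom := ⟨a.pred, a.args.map (Term.subst σ)⟩

/-- A substitution is ground if it never yields a variable. -/
def GroundSub (σ : ℕ → Term) : Prop := ∀ x y : ℕ, σ x ≠ Term.var y

/-- A tuple-generating dependency `B[x,y] → ∃v. H[y,v]`, represented by its body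
and head; universal, frontier, and existential variables are derived. -/
structure TGD : Type where
  body : Finset Atom
  head : Finset Atom
  deriving DecidableEq

def TGD.bodyVars (ρ : TGD) : Set ℕ := { x | ∃ a ∈ ρ.body, x ∈ a.vars }
def TGD.headVars (ρ : TGD) : Set ℕ := { x | ∃ a ∈ ρ.head, x ∈ a.vars }
/-- the frontier variables `y⃗` -/
def TGD.frontier (ρ : TGD) : Set ℕ := ρ.bodyVars ∩ ρ.headVars
/-- the existentially quantified variables `v⃗` -/
def TGD.exVars (ρ : TGD) : Set ℕ := ρ.headVars \ ρ.bodyVars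
def TGD.allVars (ρ : TGD) : Set ℕ := ρ.bodyVars ∪ ρ.headVars
def TGD.isDatalog (ρ : TGD) : Prop := ρ.exVars = ∅

/-- `σ` is a match of the body of `ρ` in `I`. -/
def BodyMatch (I : Set Atom) (ρ : TGD) (σ : ℕ → Term) : Prop :=
  GroundSub σ ∧ ∀ a ∈ ρ.body, a.subst σ ∈ I

/-- The match `σ` of `ρ` is satisfied in `I`. -/
def MatchSatisfied (I : Set Atom) (ρ : TGD) (σ : ℕ → Term) : Prop :=
  ∃ σ' : ℕ → Term, GroundSub σ' ∧ (∀ x ∈ ρ.bodyVars, σ' x = σ x) ∧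
    ∀ a ∈ ρ.head, a.subst σ' ∈ I

def SatTGD (I : Set Atom) (ρ : TGD) : Prop := ∀ σ, BodyMatch I ρ σ → MatchSatisfied I ρ σ

/-- A database: a finite set of variable-free, null-free atoms. -/
def IsDatabase (D : Set Atom) : Prop :=
  D.Finite ∧ ∀ a ∈ D, ∀ t ∈ a.args, ∃ c : ℕ, t = Term.const c

def termsOf (I : Set Atom) : Set Term := { t | ∃ a ∈ I, t ∈ a.args }

/-- Data of a single chase step: the applied tgd, the match, and the extended match. -/
structure Step : Type where
  rule : TGD
  m : ℕ → Term
  mx : ℕ → Term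

/-- A Datalog-first standard chase sequence for the tgd set `S` and database `D`. -/
structure ChaseSeq (S : Finset TGD) (D : Set Atom) : Type where
  seq : ℕ → Set Atom
  step : ℕ → Option Step
  init : seq 0 = D
  app : ∀ i st, step i = some st →
    st.rule ∈ S ∧
    BodyMatch (seq i) st.rule st.m ∧
    ¬ MatchSatisfied (seq i) st.rule st.m ∧
    (∀ x ∈ st.rule.bodyVars, st.mx x = st.m x) ∧
    (∀ v ∈ st.rule.exVars, ∃ n : ℕ, st.mx v = Term.null n ∧ Term.null n ∉ termsOf (seq i)) ∧
    (∀ v ∈ st.rule.exVars, ∀ w ∈ st.rule.exVars, st.mx v = st.mx w → v = w) ∧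
    seq (i + 1) = seq i ∪ { a | ∃ b ∈ st.rule.head, a = b.subst st.mx } ∧
    (st.rule.exVars ≠ ∅ → ∀ ρ ∈ S, ρ.isDatalog → SatTGD (seq i) ρ)
  halt : ∀ i, step i = none → seq (i + 1) = seq i ∧ ∀ ρ ∈ S, SatTGD (seq i) ρ
  fair : ∀ i, ∀ ρ ∈ S, ∀ σ, BodyMatch (seq i) ρ σ → ∃ j, i < j ∧ MatchSatisfied (seq j) ρ σ

def chase {S : Finset TGD} {D : Set Atom} (cs : ChaseSeq S D) : Set Atom := ⋃ i, cs.seq i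

def chaseTerms {S : Finset TGD} {D : Set Atom} (cs : ChaseSeq S D) : Set Term :=
  termsOf (chase cs)

/-- The null `n` is introduced at step `i` (with step data `st`) as the fresh value of
the existential variable `v`. -/
def IntroducedAt {S : Finset TGD} {D : Set Atom} (cs : ChaseSeq S D) (n i : ℕ) (st : Step)
    (v : ℕ) : Prop :=
  cs.step i = some st ∧ v ∈ st.rule.exVars ∧ st.mx v = Term.null n

/-- `var(n) = v`. -/
def NullVar {S : Finset TGD} {D : Set Atom} (cs : ChaseSeq S D) (n v : ℕ) : Prop :=
  ∃ i st, IntroducedAt cs n i st v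

/-- Chase edge `t →_y n`. -/
def ChaseEdge {S : Finset TGD} {D : Set Atom} (cs : ChaseSeq S D) (t : Term) (y n : ℕ) : Prop :=
  ∃ i st v, IntroducedAt cs n i st v ∧ y ∈ st.rule.frontier ∧ st.m y = t

/-- The variables of the tgds in `S` are renamed apart. -/
def RenamedApart (S : Finset TGD) : Prop :=
  ∀ ρ₁ ∈ S, ∀ ρ₂ ∈ S, ρ₁ ≠ ρ₂ → ρ₁.allVars ∩ ρ₂.allVars = ∅

/-- A predicate position `⟨p, i⟩`. -/
abbrev Pos := ℕ × ℕ

def posIn (x : ℕ) (A : Finset Atom) : Set Pos :=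
  { pq | ∃ a ∈ A, a.pred = pq.1 ∧ a.args[pq.2]? = some (Term.var x) }

/-- positions of `x` in the body of `ρ` -/
def posB (ρ : TGD) (x : ℕ) : Set Pos := posIn x ρ.body
/-- positions of `x` in the head of `ρ` -/
def posH (ρ : TGD) (x : ℕ) : Set Pos := posIn x ρ.head

/-- `Ω_v` for the existential variable `v` of the tgd `ρv`: the smallest set of positions
containing `posH ρv v` and closed under propagation through universal variables. -/
inductive Omega (S : Finset TGD) (ρv : TGD) (v : ℕ) : Pos → Prop
  | base : ∀ {pq}, pq ∈ posH ρv v → Omega S ρv v pq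
  | step : ∀ {ρ : TGD} {x : ℕ} {pq}, ρ ∈ S → x ∈ ρ.bodyVars →
      (∀ q ∈ posB ρ x, Omega S ρv v q) → pq ∈ posH ρ x → Omega S ρv v pq

/-- `v` is a vertex of `ledgraph(S)`. -/
def LVertex (S : Finset TGD) (v : ℕ) : Prop := ∃ ρ ∈ S, v ∈ ρ.exVars

/-- Edge `v →_y w` of the labelled existential dependency graph `ledgraph(S)`. -/
def LEdge (S : Finset TGD) (v y w : ℕ) : Prop :=
  ∃ ρv ∈ S, ∃ ρw ∈ S, v ∈ ρv.exVars ∧ w ∈ ρw.exVars ∧ y ∈ ρw.frontier ∧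
    ∀ pq ∈ posB ρw y, Omega S ρv v pq

def LEdgeAny (S : Finset TGD) (v w : ℕ) : Prop := ∃ y, LEdge S v y w

/-- `ledgraph(S)` is acyclic. -/
def LAcyclic (S : Finset TGD) : Prop := ∀ v, ¬ Relation.TransGen (LEdgeAny S) v v

def LReach (S : Finset TGD) : ℕ → ℕ → Prop := Relation.ReflTransGen (LEdgeAny S)

/-- The strongly connected component of `v` in `ledgraph(S)`. -/
def scc (S : Finset TGD) (v : ℕ) : Set ℕ := { u | LReach S u v ∧ LReach S v u }

/-- A path `v₀ →_{y₁} v₁ →_{y₂} ⋯ →_{y_len} v_len` in `ledgraph(S)`, together with,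
for each `1 ≤ i ≤ len`, the tgd of the vertex `v_i`. -/
structure LPath (S : Finset TGD) : Type where
  len : ℕ
  vtx : ℕ → ℕ
  lab : ℕ → ℕ
  tgd : ℕ → TGD
  edge : ∀ i, 1 ≤ i → i ≤ len → LEdge S (vtx (i - 1)) (lab i) (vtx i)
  mem : ∀ i, 1 ≤ i → i ≤ len → tgd i ∈ S ∧ vtx i ∈ (tgd i).exVars ∧ lab i ∈ (tgd i).frontier

/-- The renamed variable `ỹ_j` of the path query: `ỹ_j` is the copy of the frontier
variable `y_j` in the `j`-th copied tgd, and `ỹ_{len+1}` is a fresh variable. -/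
def ytil {S : Finset TGD} (p : LPath S) (j : ℕ) : ℕ :=
  if j ≤ p.len then Nat.pair j (p.lab j) else Nat.pair j 0

/-- Renaming of the variables of the `i`-th copied tgd (body). -/
def bodyRen (i : ℕ) : ℕ → Term := fun x => Term.var (Nat.pair i x)

/-- Renaming of the variables of the `i`-th copied tgd (head), where the existential
variable `v_i` is replaced by `ỹ_{i+1}`. -/
def headRen {S : Finset TGD} (p : LPath S) (i : ℕ) : ℕ → Term :=
  fun x => if x = p.vtx i then Term.var (ytil p (i + 1)) else Term.var (Nat.pair i x)

/-- The atoms of the conjunctive query `Path(𝔭) = ⋀ᵢ (Bᵢ ∧ Hᵢ[ṽᵢ/ỹᵢ₊₁])`. -/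
def pathAtoms {S : Finset TGD} (p : LPath S) : Set Atom :=
  { a | ∃ i, 1 ≤ i ∧ i ≤ p.len ∧
      ((∃ b ∈ (p.tgd i).body, a = b.subst (bodyRen i)) ∨
       (∃ b ∈ (p.tgd i).head, a = b.subst (headRen p i))) }

/-- The Datalog rules of `S` entail the rule `B → H` (all variables of `H` occur in `B`). -/
def DatalogEntails (S : Finset TGD) (B H : Set Atom) : Prop :=
  ∀ I : Set Atom, (∀ ρ ∈ S, ρ.isDatalog → SatTGD I ρ) →
    ∀ σ : ℕ → Term, GroundSub σ → (∀ a ∈ B, a.subst σ ∈ I) → ∀ a ∈ H, a.subst σ ∈ I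

/-- Substitution producing `H*[ỹ_{ℓ+1}, z̃⃗₁, ỹ₂, w̃⃗₁]` from the head of the first tgd
of the path. -/
def basePropSub {S : Finset TGD} (p : LPath S) : ℕ → Term :=
  fun x =>
    if x = p.lab 1 then Term.var (ytil p (p.len + 1))
    else if x = p.vtx 1 then Term.var (ytil p 2)
    else Term.var (Nat.pair 1 x)

/-- The path `𝔭` (starting with an edge `u* →_{y*} v*`) is base-propagating. -/
def BasePropagating {S : Finset TGD} (p : LPath S) : Prop :=
  DatalogEntails S (pathAtoms p) { a | ∃ b ∈ (p.tgd 1).head, a = b.subst (basePropSub p) }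

/-- Substitution producing `H*[ỹ_{l+1}, x⃗_z, ỹ₂, x⃗_w]` (fresh variables `Nat.pair 0 _`). -/
def stepPremSub {S : Finset TGD} (p : LPath S) (l ystar vstar : ℕ) : ℕ → Term :=
  fun x =>
    if x = ystar then Term.var (ytil p (l + 1))
    else if x = vstar then Term.var (ytil p 2)
    else Term.var (Nat.pair 0 x)

/-- Substitution producing `H*[ỹ_{l+k+1}, x⃗_z, ỹ_{l+2}, x⃗_w]`. -/
def stepConcSub {S : Finset TGD} (p : LPath S) (l ystar vstar : ℕ) : ℕ → Term :=
  fun x =>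
    if x = ystar then Term.var (ytil p (p.len + 1))
    else if x = vstar then Term.var (ytil p (l + 2))
    else Term.var (Nat.pair 0 x)

/-- The composite path `p = 𝔭^a 𝔭^b` (with `𝔭^a` of length `l`) is step-propagating for
the edge `u* →_{ystar} vstar` whose tgd is `ρstar`. -/
def StepPropagating {S : Finset TGD} (p : LPath S) (l : ℕ) (ρstar : TGD)
    (ystar vstar : ℕ) : Prop :=
  DatalogEntails S
    (pathAtoms p ∪ { a | ∃ b ∈ ρstar.head, a = b.subst (stepPremSub p l ystar vstar) })
    { a | ∃ b ∈ ρstar.head, a = b.subst (stepConcSub p l ystar vstar) }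

/-- A labelled edge `(u, y, v)`, i.e. `u →_y v`. -/
abbrev EdgeSet := Set (ℕ × ℕ × ℕ)

def EdgeInC (S : Finset TGD) (C : Set ℕ) (e : ℕ × ℕ × ℕ) : Prop :=
  e.1 ∈ C ∧ e.2.2 ∈ C ∧ LEdge S e.1 e.2.1 e.2.2

/-- The strongly connected component `C` is `E`-saturating. -/
def ESaturating (S : Finset TGD) (C : Set ℕ) (E : EdgeSet) : Prop :=
  (∀ e ∈ E, EdgeInC S C e) ∧
  -- (1) C without the edges of E is acyclic
  (∀ v, ¬ Relation.TransGen
      (fun a b => a ∈ C ∧ b ∈ C ∧ ∃ y, LEdge S a y b ∧ (a, y, b) ∉ E) v v) ∧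
  -- (2) E-edges with a common target carry the same label
  (∀ u x v u' x', (u, x, v) ∈ E → (u', x', v) ∈ E → x = x') ∧
  -- (3) every path e𝔭 with e ∈ E and 𝔭 an Ē-path is base-propagating
  (∀ p : LPath S, 1 ≤ p.len →
    (∀ i ≤ p.len, p.vtx i ∈ C) →
    (p.vtx 0, p.lab 1, p.vtx 1) ∈ E →
    (∀ i, 2 ≤ i → i ≤ p.len → (p.vtx (i - 1), p.lab i, p.vtx i) ∉ E) →
    (∃ e ∈ E, e.1 = p.vtx p.len) →
    BasePropagating p) ∧
  -- (4) every path e^a 𝔭₁ e^b 𝔭₂ with e^a, e^b ∈ E and 𝔭₁, 𝔭₂ Ē-paths is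
  --     step-propagating for every e ∈ E
  (∀ p : LPath S, ∀ l, 1 ≤ l → l < p.len →
    (∀ i ≤ p.len, p.vtx i ∈ C) →
    (p.vtx 0, p.lab 1, p.vtx 1) ∈ E →
    (p.vtx l, p.lab (l + 1), p.vtx (l + 1)) ∈ E →
    (∀ i, 2 ≤ i → i ≤ l → (p.vtx (i - 1), p.lab i, p.vtx i) ∉ E) →
    (∀ i, l + 2 ≤ i → i ≤ p.len → (p.vtx (i - 1), p.lab i, p.vtx i) ∉ E) →
    (∃ e ∈ E, e.1 = p.vtx p.len) →
    ∀ e ∈ E, ∀ ρstar ∈ S, e.2.2 ∈ ρstar.exVars →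
      StepPropagating p l ρstar e.2.1 e.2.2)

/-- `S` is saturating: every strongly connected component of `ledgraph(S)` is
`E`-saturating for some `E`. -/
def Saturating (S : Finset TGD) : Prop :=
  ∀ v, LVertex S v → ∃ E : EdgeSet, ESaturating S (scc S v) E

/-- `λ(v)`: the labels of edges into `v` from within its own SCC. -/
def labelSet (S : Finset TGD) (v : ℕ) : Set ℕ := { x | ∃ u ∈ scc S v, LEdge S u x v }

/-- `conf(v)`. -/
noncomputable def conf (S : Finset TGD) (v : ℕ) : ℕ := (labelSet S v).ncard

/-- `conf(C)`. -/
noncomputable def confC (S : Finset TGD) (C : Set ℕ) : ℕ := sSup (conf S '' C)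

/-- `t` is a `C`-input of the chase. -/
def CInput {S : Finset TGD} {D : Set Atom} (cs : ChaseSeq S D) (C : Set ℕ) (t : Term) : Prop :=
  t ∈ chaseTerms cs ∧
    ((∃ c, t = Term.const c) ∨
     ∃ n v, t = Term.null n ∧ NullVar cs n v ∧ v ∉ C ∧ ∃ x w, w ∈ C ∧ LEdge S v x w)

/-- `m 0 → m 1 → ⋯ → m k` is a chain of chase edges all of whose nulls belong
(via `var`) to `C`. -/
def CChain {S : Finset TGD} {D : Set Atom} (cs : ChaseSeq S D) (C : Set ℕ)
    (k : ℕ) (m : ℕ → ℕ) : Prop :=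
  (∀ i ≤ k, ∃ v ∈ C, NullVar cs (m i) v) ∧
  (∀ i, 1 ≤ i → i ≤ k → ∃ x, ChaseEdge cs (Term.null (m (i - 1))) x (m i))

/-- The null `n` has `C`-depth at most `d`. -/
def CDepthLe {S : Finset TGD} {D : Set Atom} (cs : ChaseSeq S D) (C : Set ℕ)
    (n d : ℕ) : Prop :=
  (∃ v ∈ C, NullVar cs n v) ∧ ∀ k m, CChain cs C k m → m k = n → k ≤ d

/-- Vertices of SCCs that are direct `≺`-predecessors of `scc v`. -/
def InPred (S : Finset TGD) (v : ℕ) : Set ℕ :=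
  { u | LVertex S u ∧ u ∉ scc S v ∧ ∃ y w, w ∈ scc S v ∧ LEdge S u y w }

/-- Vertices of the SCCs in `𝒞_cxt` for `scc v` (w.r.t. the chosen edge sets `EC`). -/
def CxtPred (S : Finset TGD) (EC : ℕ → EdgeSet) (v : ℕ) : Set ℕ :=
  { u | ∃ v' w x y, v' ∈ scc S v ∧ w ∈ scc S v ∧ (w, x, v') ∈ EC v ∧
      LEdge S u y v' ∧ x ≠ y }

/-- A choice of edge sets `EC` (constant on SCCs, making every SCC saturating) and a
rank function (constant on SCCs) satisfying the defining equations of Definition 5.3. -/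
def RankSystem (S : Finset TGD) (EC : ℕ → EdgeSet) (rank : ℕ → ℕ) : Prop :=
  (∀ v, LVertex S v → ESaturating S (scc S v) (EC v)) ∧
  (∀ u v : ℕ, u ∈ scc S v → EC u = EC v) ∧
  (∀ u v : ℕ, u ∈ scc S v → rank u = rank v) ∧
  (∀ v, LVertex S v →
    rank v =
      if confC S (scc S v) = 0 then sSup (insert 0 (rank '' InPred S v))
      else if confC S (scc S v) = 1 then
        max (sSup (insert 0 (rank '' InPred S v)))
          (sSup (insert 0 (rank '' CxtPred S EC v)) + 1)
      else
        max (sSup (insert 0 (rank '' InPred S v)))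
          (sSup (insert 0 (rank '' CxtPred S EC v)) + 2))

/-- `k`-fold iterated exponential. -/
def iterExp : ℕ → ℕ → ℕ
  | 0, n => n
  | k + 1, n => 2 ^ iterExp k n

/-- `f` is a `k`-exponential function: bounded by the `k`-fold iterated exponential of a
polynomial (0-exponential means polynomial). -/
def KExpBounded (k : ℕ) (f : ℕ → ℕ) : Prop :=
  ∃ c e : ℕ, ∀ n, f n ≤ iterExp k (c * (n + 1) ^ e)

/-- `S` is arboreous (w.r.t. a rank system), with `scc S vhat` the unique SCC of maximal
rank and `conf` at most 1. -/
def Arboreous (S : Finset TGD) (EC : ℕ → EdgeSet) (rank : ℕ → ℕ) (vhat : ℕ) : Prop :=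
  RankSystem S EC rank ∧ LVertex S vhat ∧
  (∀ u, LVertex S u → rank u ≤ rank vhat) ∧
  (∀ u, LVertex S u → rank u = rank vhat → u ∈ scc S vhat) ∧
  confC S (scc S vhat) ≤ 1

/-- Edge `n ↠ m` of the null forest of `C`. -/
def NfEdge {S : Finset TGD} {D : Set Atom} (cs : ChaseSeq S D) (C : Set ℕ)
    (n m : ℕ) : Prop :=
  (∃ v ∈ C, NullVar cs n v) ∧ (∃ v ∈ C, NullVar cs m v) ∧
    ∃ x, ChaseEdge cs (Term.null n) x m

/-- `ρ` is an `Ê`-tgd: it has an existential variable that is the target of an `Ê`-edge. -/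
def IsETgd (Ehat : EdgeSet) (ρ : TGD) : Prop := ∃ e ∈ Ehat, e.2.2 ∈ ρ.exVars

/-- `V_Ê`: the existential variables in `C` occurring in some `Ê`-tgd. -/
def VEhat (S : Finset TGD) (C : Set ℕ) (Ehat : EdgeSet) : Set ℕ :=
  { v | v ∈ C ∧ ∃ ρ ∈ S, IsETgd Ehat ρ ∧ v ∈ ρ.exVars }

/-- `n` is a fresh null of chase step `i`. -/
def FreshAt {S : Finset TGD} {D : Set Atom} (cs : ChaseSeq S D) (i n : ℕ) : Prop :=
  ∃ st v, IntroducedAt cs n i st v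

/-- Step `i` applies an `Ê`-tgd. -/
def EStep {S : Finset TGD} {D : Set Atom} (cs : ChaseSeq S D) (Ehat : EdgeSet)
    (i : ℕ) : Prop :=
  ∃ st, cs.step i = some st ∧ IsETgd Ehat st.rule

/-- `N̂`: the nulls of variables in `C`. -/
def Nhat {S : Finset TGD} {D : Set Atom} (cs : ChaseSeq S D) (C : Set ℕ) : Set ℕ :=
  { n | ∃ v ∈ C, NullVar cs n v }

/-- `R̄`: nulls of `N̂` not introduced at any `Ê`-step. -/
def Rbar {S : Finset TGD} {D : Set Atom} (cs : ChaseSeq S D) (C : Set ℕ)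
    (Ehat : EdgeSet) : Set ℕ :=
  { n | n ∈ Nhat cs C ∧ ∀ i, EStep cs Ehat i → ¬ FreshAt cs i n }

/-- Membership in `F[i]`: the least set containing `R[i]` and closed under null-forest
edges into `R̄`. -/
inductive FsetMem {S : Finset TGD} {D : Set Atom} (cs : ChaseSeq S D) (C : Set ℕ)
    (Ehat : EdgeSet) (i : ℕ) : ℕ → Prop
  | base : ∀ {n}, FreshAt cs i n → FsetMem cs C Ehat i n
  | step : ∀ {n m}, FsetMem cs C Ehat i n → m ∈ Rbar cs C Ehat → NfEdge cs C n m →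
      FsetMem cs C Ehat i m

/-- `F[i]` as a set of terms. -/
def Fnode {S : Finset TGD} {D : Set Atom} (cs : ChaseSeq S D) (C : Set ℕ) (Ehat : EdgeSet)
    (i : ℕ) : Set Term :=
  { t | ∃ n, t = Term.null n ∧ FsetMem cs C Ehat i n }

/-- `𝓕`: the collection of the sets `F[i]` for `Ê`-steps `i`. -/
def Fcal {S : Finset TGD} {D : Set Atom} (cs : ChaseSeq S D) (C : Set ℕ)
    (Ehat : EdgeSet) : Set (Set Term) :=
  { X | ∃ i, EStep cs Ehat i ∧ X = Fnode cs C Ehat i }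

/-- `B₀`: all terms of the chase lying in no member of `𝓕`. -/
def B0 {S : Finset TGD} {D : Set Atom} (cs : ChaseSeq S D) (C : Set ℕ)
    (Ehat : EdgeSet) : Set Term :=
  { t | t ∈ chaseTerms cs ∧ ∀ X ∈ Fcal cs C Ehat, t ∉ X }

/-- The node set `N_∼` of the term tree. -/
def Nodes {S : Finset TGD} {D : Set Atom} (cs : ChaseSeq S D) (C : Set ℕ)
    (Ehat : EdgeSet) : Set (Set Term) :=
  insert (B0 cs C Ehat) (Fcal cs C Ehat)

/-- `F₁ ⇒ F₂` between members of `𝓕`. -/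
def FEdge0 {S : Finset TGD} {D : Set Atom} (cs : ChaseSeq S D) (C : Set ℕ) (Ehat : EdgeSet)
    (X Y : Set Term) : Prop :=
  X ∈ Fcal cs C Ehat ∧ Y ∈ Fcal cs C Ehat ∧ X ≠ Y ∧
    ∃ n m, Term.null n ∈ X ∧ Term.null m ∈ Y ∧ NfEdge cs C n m

/-- The edge relation `⇒` of the term tree (extended by edges from `B₀`). -/
def TEdge {S : Finset TGD} {D : Set Atom} (cs : ChaseSeq S D) (C : Set ℕ) (Ehat : EdgeSet)
    (X Y : Set Term) : Prop :=
  FEdge0 cs C Ehat X Y ∨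
    (X = B0 cs C Ehat ∧ Y ∈ Fcal cs C Ehat ∧ ∀ Z, ¬ FEdge0 cs C Ehat Z Y)

/-- `⇒*`. -/
def TReach {S : Finset TGD} {D : Set Atom} (cs : ChaseSeq S D) (C : Set ℕ)
    (Ehat : EdgeSet) : Set Term → Set Term → Prop :=
  Relation.ReflTransGen (TEdge cs C Ehat)

/-- The relation `⊴` on variables induced by a relation `R` on positions. -/
def TriRel (S : Finset TGD) (R : Pos → Pos → Prop) : ℕ → ℕ → Prop :=
  Relation.ReflTransGen (fun x y => ∃ ρ ∈ S, ∃ a ∈ ρ.body, ∃ i j : ℕ,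
    a.args[i]? = some (Term.var x) ∧ a.args[j]? = some (Term.var y) ∧
    R (a.pred, i) (a.pred, j))

/-- `R` satisfies the constraints (1)–(4) of Definition 6.4 on `⪯`. -/
def Admissible (S : Finset TGD) (C : Set ℕ) (Ehat : EdgeSet)
    (R : Pos → Pos → Prop) : Prop :=
  ∀ ρ ∈ S, ∀ a ∈ ρ.head, ∀ i j : ℕ, ∀ vi vj : ℕ,
    a.args[i]? = some (Term.var vi) → a.args[j]? = some (Term.var vj) →
    R (a.pred, i) (a.pred, j) →
      (¬ (vi ∈ ρ.exVars ∧ vi ∈ C ∧ vj ∈ ρ.exVars ∧ vj ∉ C)) ∧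
      (¬ (vi ∈ ρ.exVars ∧ vi ∈ VEhat S C Ehat ∧ vj ∈ ρ.frontier)) ∧
      (¬ (vi ∈ ρ.exVars ∧ vi ∈ C ∧ vj ∈ ρ.frontier ∧ vj ∉ labelSet S vi)) ∧
      (vi ∈ ρ.frontier → vj ∈ ρ.frontier → TriRel S R vi vj)

/-- `R` is the relation `⪯`: the largest relation satisfying constraints (1)–(4). -/
def IsPrecRel (S : Finset TGD) (C : Set ℕ) (Ehat : EdgeSet)
    (R : Pos → Pos → Prop) : Prop :=
  Admissible S C Ehat R ∧
    ∀ R' : Pos → Pos → Prop, Admissible S C Ehat R' → ∀ p q, R' p q → R p q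

/-- `Ω̂`: the `Ĉ`-affected positions. -/
def OmegaHat (S : Finset TGD) (C : Set ℕ) : Set Pos :=
  { pq | ∃ v ∈ C, ∃ ρ ∈ S, v ∈ ρ.exVars ∧ Omega S ρ v pq }

/-- The body variable `x` of `ρ` is `Ĉ`-affected. -/
def CAffected (S : Finset TGD) (C : Set ℕ) (ρ : TGD) (x : ℕ) : Prop :=
  x ∈ ρ.bodyVars ∧ ∀ pq ∈ posB ρ x, pq ∈ OmegaHat S C

/-- `S` is path-guarded (w.r.t. `Ĉ = C` and the relation `⊴` induced by `R = ⪯`). -/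
def PathGuarded (S : Finset TGD) (C : Set ℕ) (R : Pos → Pos → Prop) : Prop :=
  ∀ ρ ∈ S, ∀ x y : ℕ, CAffected S C ρ x → CAffected S C ρ y →
    TriRel S R x y ∨ TriRel S R y x

/-- The constants occurring in `S` and `D`. -/
def constsIn (S : Finset TGD) (D : Set Atom) : Set ℕ :=
  { c | (∃ a ∈ D, Term.const c ∈ a.args) ∨
        ∃ ρ ∈ S, ∃ a : Atom, (a ∈ ρ.body ∨ a ∈ ρ.head) ∧ Term.const c ∈ a.args }


/-! ### Auxiliary development for Statement 1 -/

noncomputable section Statement1Aux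
open Classical

variable {S : Finset TGD} {D : Set Atom}

lemma termsOf_mono {I J : Set Atom} (h : I ⊆ J) : termsOf I ⊆ termsOf J := by
  rintro t ⟨a, ha, hta⟩; exact ⟨a, h ha, hta⟩

lemma seq_succ_sub (cs : ChaseSeq S D) (i : ℕ) : cs.seq i ⊆ cs.seq (i + 1) := by
  cases h : cs.step i with
  | none => rw [(cs.halt i h).1]
  | some st =>
    obtain ⟨-, -, -, -, -, -, h7, -⟩ := cs.app i st h
    rw [h7]; exact Set.subset_union_left

lemma seq_mono (cs : ChaseSeq S D) : Monotone cs.seq :=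
  monotone_nat_of_le_succ (seq_succ_sub cs)

lemma m_mem_terms (cs : ChaseSeq S D) {i : ℕ} {st : Step} (hst : cs.step i = some st)
    {x : ℕ} (hx : x ∈ st.rule.bodyVars) : st.m x ∈ termsOf (cs.seq i) := by
  obtain ⟨-, hbm, -⟩ := cs.app i st hst
  obtain ⟨a, ha, hxa⟩ := hx
  refine ⟨a.subst st.m, hbm.2 a ha, ?_⟩
  have : Term.subst st.m (Term.var x) ∈ (a.args.map (Term.subst st.m)) :=
    List.mem_map_of_mem hxa
  exact this

lemma new_atom_mem (cs : ChaseSeq S D) {i : ℕ} {st : Step} (hst : cs.step i = some st)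
    {b : Atom} (hb : b ∈ st.rule.head) : b.subst st.mx ∈ cs.seq (i + 1) := by
  obtain ⟨-, -, -, -, -, -, h7, -⟩ := cs.app i st hst
  rw [h7]; exact Or.inr ⟨b, hb, rfl⟩

lemma intro_mem_terms (cs : ChaseSeq S D) {n i : ℕ} {st : Step} {v : ℕ}
    (h : IntroducedAt cs n i st v) : Term.null n ∈ termsOf (cs.seq (i + 1)) := by
  obtain ⟨hst, hv, hmx⟩ := h
  obtain ⟨a, ha, hva⟩ := hv.1
  refine ⟨a.subst st.mx, new_atom_mem cs hst ha, ?_⟩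
  have : Term.subst st.mx (Term.var v) ∈ (a.args.map (Term.subst st.mx)) :=
    List.mem_map_of_mem hva
  have he : Term.subst st.mx (Term.var v) = Term.null n := by
    show st.mx v = Term.null n; exact hmx
  rwa [he] at this

lemma intro_not_before (cs : ChaseSeq S D) {n i : ℕ} {st : Step} {v : ℕ}
    (h : IntroducedAt cs n i st v) : Term.null n ∉ termsOf (cs.seq i) := by
  obtain ⟨hst, hv, hmx⟩ := h
  obtain ⟨-, -, -, -, h5, -, -, -⟩ := cs.app i st hst
  obtain ⟨n', h1, h2⟩ := h5 v hv
  have : n' = n := by rw [hmx] at h1; exact Term.null.inj h1.symm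
  rwa [this] at h2

lemma intro_unique (cs : ChaseSeq S D) {n i j : ℕ} {st st' : Step} {v v' : ℕ}
    (h : IntroducedAt cs n i st v) (h' : IntroducedAt cs n j st' v') : i = j := by
  rcases lt_trichotomy i j with hij | hij | hij
  · exact absurd (termsOf_mono (seq_mono cs hij) (intro_mem_terms cs h))
      (intro_not_before cs h')
  · exact hij
  · exact absurd (termsOf_mono (seq_mono cs hij) (intro_mem_terms cs h'))
      (intro_not_before cs h)

/-- A rule cannot fire twice with the same frontier assignment. -/
lemma no_refire (cs : ChaseSeq S D) {i j : ℕ} {st st' : Step}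
    (hi : cs.step i = some st) (hj : cs.step j = some st') (hij : i < j)
    (hr : st.rule = st'.rule)
    (hfr : ∀ y ∈ st.rule.frontier, st.m y = st'.m y) : False := by
  obtain ⟨-, -, -, h4, h5, -, -, -⟩ := cs.app i st hi
  obtain ⟨-, hbm', hns', -, -, -, -, -⟩ := cs.app j st' hj
  apply hns'
  refine ⟨fun x => if x ∈ st'.rule.exVars then st.mx x else st'.m x, ?_, ?_, ?_⟩
  · intro x y
    by_cases hx : x ∈ st'.rule.exVars
    · simp only [if_pos hx]
      rw [← hr] at hx
      obtain ⟨n, hn, -⟩ := h5 x hx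
      rw [hn]; simp
    · simp only [if_neg hx]; exact hbm'.1 x y
  · intro x hx
    have hne : x ∉ st'.rule.exVars := fun h => h.2 hx
    simp [hne]
  · intro a ha
    have key : a.subst (fun x => if x ∈ st'.rule.exVars then st.mx x else st'.m x)
        = a.subst st.mx := by
      simp only [Atom.subst, Atom.mk.injEq, true_and]
      apply List.map_congr_left
      intro t htl
      cases t with
      | const c => rfl
      | null m => rfl
      | var x =>
        have hxh : x ∈ st'.rule.headVars := ⟨a, ha, htl⟩
        show (if x ∈ st'.rule.exVars then st.mx x else st'.m x) = st.mx x
        by_cases hx : x ∈ st'.rule.exVars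
        · simp [hx]
        · have hxb : x ∈ st'.rule.bodyVars := by
            by_contra hnb; exact hx ⟨hxh, hnb⟩
          have hxb' : x ∈ st.rule.bodyVars := by rw [hr]; exact hxb
          have hxf : x ∈ st.rule.frontier := ⟨hxb', by rw [hr]; exact hxh⟩
          simp only [if_neg hx]
          rw [h4 x hxb']
          exact (hfr x hxf).symm
    rw [key]
    have ha' : a ∈ st.rule.head := by rw [hr]; exact ha
    exact seq_mono cs (Nat.succ_le_of_lt hij) (new_atom_mem cs hi ha')

/-- All terms of `S` and `D`. -/
def Pool (S : Finset TGD) (D : Set Atom) : Set Term :=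
  termsOf D ∪ { t | ∃ ρ ∈ S, ∃ a : Atom, (a ∈ ρ.body ∨ a ∈ ρ.head) ∧ t ∈ a.args }

lemma pool_finite (hD : D.Finite) : (Pool S D).Finite := by
  apply Set.Finite.union
  · apply Set.Finite.subset (hD.biUnion (fun a _ => a.args.finite_toSet))
    rintro t ⟨a, ha, hta⟩; exact Set.mem_biUnion ha hta
  · apply Set.Finite.subset (S.finite_toSet.biUnion
      (fun ρ _ => ((ρ.body ∪ ρ.head : Finset Atom).finite_toSet.biUnion
        (fun a _ => a.args.finite_toSet))))
    rintro t ⟨ρ, hρ, a, ha, hta⟩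
    exact Set.mem_biUnion hρ (Set.mem_biUnion (by simpa [Finset.mem_union] using ha) hta)

/-- `n` is an introduced null. -/
def IntroN (cs : ChaseSeq S D) (n : ℕ) : Prop := ∃ i st v, IntroducedAt cs n i st v

/-- Classification of the terms of `cs.seq i`. -/
lemma terms_class (cs : ChaseSeq S D) :
    ∀ i, ∀ t ∈ termsOf (cs.seq i),
      t ∈ Pool S D ∨ ∃ n, t = Term.null n ∧ ∃ j, j < i ∧ ∃ st v, IntroducedAt cs n j st v := by
  intro i
  induction i with
  | zero =>
    intro t ht
    rw [cs.init] at ht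
    exact Or.inl (Or.inl ht)
  | succ i ih =>
    intro t ht
    obtain ⟨a, ha, hta⟩ := ht
    cases hstep : cs.step i with
    | none =>
      rw [(cs.halt i hstep).1] at ha
      rcases ih t ⟨a, ha, hta⟩ with hp | ⟨n, h1, j, h2, h3⟩
      · exact Or.inl hp
      · exact Or.inr ⟨n, h1, j, Nat.lt_succ_of_lt h2, h3⟩
    | some st =>
      obtain ⟨h1, -, -, h4, h5, -, h7, -⟩ := cs.app i st hstep
      rw [h7] at ha
      rcases ha with ha | ⟨b, hb, rfl⟩
      · rcases ih t ⟨a, ha, hta⟩ with hp | ⟨n, hh1, j, hh2, hh3⟩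
        · exact Or.inl hp
        · exact Or.inr ⟨n, hh1, j, Nat.lt_succ_of_lt hh2, hh3⟩
      · obtain ⟨t0, ht0, rfl⟩ := List.mem_map.1 hta
        cases t0 with
        | const c => exact Or.inl (Or.inr ⟨st.rule, h1, b, Or.inr hb, ht0⟩)
        | null m => exact Or.inl (Or.inr ⟨st.rule, h1, b, Or.inr hb, ht0⟩)
        | var x =>
          have hxh : x ∈ st.rule.headVars := ⟨b, hb, ht0⟩
          by_cases hx : x ∈ st.rule.bodyVars
          · have : Term.subst st.mx (Term.var x) = st.m x := h4 x hx
            rw [this]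
            rcases ih _ (m_mem_terms cs hstep hx) with hp | ⟨n, hh1, j, hh2, hh3⟩
            · exact Or.inl hp
            · exact Or.inr ⟨n, hh1, j, Nat.lt_succ_of_lt hh2, hh3⟩
          · have hex : x ∈ st.rule.exVars := ⟨hxh, hx⟩
            obtain ⟨n, hn, -⟩ := h5 x hex
            refine Or.inr ⟨n, ?_, i, Nat.lt_succ_self i, st, x, hstep, hex, hn⟩
            show st.mx x = Term.null n
            exact hn

/-- All atoms of `S` and `D`. -/
def AtomPool (S : Finset TGD) (D : Set Atom) : Set Atom :=
  D ∪ { a | ∃ ρ ∈ S, a ∈ ρ.body ∨ a ∈ ρ.head }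

lemma atomPool_finite (hD : D.Finite) : (AtomPool S D).Finite := by
  apply Set.Finite.union hD
  apply Set.Finite.subset (S.finite_toSet.biUnion
    (fun ρ _ => (ρ.body ∪ ρ.head : Finset Atom).finite_toSet))
  rintro a ⟨ρ, hρ, ha⟩
  exact Set.mem_biUnion hρ (by simpa [Finset.mem_union] using ha)

lemma atom_shape (cs : ChaseSeq S D) :
    ∀ i, ∀ a ∈ cs.seq i, ∃ a₀ ∈ AtomPool S D,
      a.pred = a₀.pred ∧ a.args.length = a₀.args.length := by
  intro i
  induction i with
  | zero => intro a ha; rw [cs.init] at ha; exact ⟨a, Or.inl ha, rfl, rfl⟩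
  | succ i ih =>
    intro a ha
    cases hstep : cs.step i with
    | none => rw [(cs.halt i hstep).1] at ha; exact ih a ha
    | some st =>
      obtain ⟨h1, -, -, -, -, -, h7, -⟩ := cs.app i st hstep
      rw [h7] at ha
      rcases ha with ha | ⟨b, hb, rfl⟩
      · exact ih a ha
      · exact ⟨b, Or.inr ⟨st.rule, h1, Or.inr hb⟩, rfl, by simp [Atom.subst]⟩

lemma lists_finite {α : Type*} {A : Set α} (hA : A.Finite) :
    ∀ K, {l : List α | l.length ≤ K ∧ ∀ x ∈ l, x ∈ A}.Finite := by
  intro K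
  induction K with
  | zero =>
    apply Set.Finite.subset (Set.finite_singleton ([] : List α))
    rintro l ⟨hl, -⟩
    simp only [Set.mem_singleton_iff]
    exact List.length_eq_zero_iff.1 (Nat.le_zero.1 hl)
  | succ K ih =>
    apply Set.Finite.subset (Set.Finite.insert ([] : List α)
      ((hA.prod ih).image (fun p : α × List α => p.1 :: p.2)))
    rintro l ⟨hl, hmem⟩
    cases l with
    | nil => exact Set.mem_insert _ _
    | cons x t =>
      refine Set.mem_insert_of_mem _ ⟨(x, t), ⟨hmem x (List.mem_cons_self (a := x) (l := t)),
        ⟨?_, fun y hy => hmem y (List.mem_cons_of_mem x hy)⟩⟩, rfl⟩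
      simpa using hl

def varIdx : Term → ℕ
  | .var x => x
  | _ => 0

def nullIdxT : Term → ℕ
  | .null n => n
  | _ => 0

lemma atom_vars_finite (a : Atom) : a.vars.Finite := by
  apply Set.Finite.subset (a.args.finite_toSet.image varIdx)
  intro x hx
  exact ⟨Term.var x, hx, rfl⟩

lemma headVars_finite (ρ : TGD) : ρ.headVars.Finite := by
  apply Set.Finite.subset (ρ.head.finite_toSet.biUnion fun a _ => atom_vars_finite a)
  rintro x ⟨a, ha, hx⟩
  exact Set.mem_biUnion ha hx

lemma exVars_finite (ρ : TGD) : ρ.exVars.Finite :=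
  (headVars_finite ρ).subset (fun _ hx => hx.1)

def varExtract : Term → Option ℕ
  | .var x => some x
  | _ => none

@[simp] lemma varExtract_eq_some {t : Term} {x : ℕ} :
    varExtract t = some x ↔ t = Term.var x := by
  cases t <;> simp [varExtract]

def bodyVarsList (ρ : TGD) : List ℕ :=
  ρ.body.toList.flatMap fun a => a.args.filterMap varExtract

lemma mem_bodyVarsList {ρ : TGD} {x : ℕ} : x ∈ bodyVarsList ρ ↔ x ∈ ρ.bodyVars := by
  simp only [bodyVarsList, List.mem_flatMap, List.mem_filterMap, varExtract_eq_some,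
    Finset.mem_toList]
  constructor
  · rintro ⟨a, ha, t, ht, rfl⟩
    exact ⟨a, ha, ht⟩
  · rintro ⟨a, ha, ht⟩
    exact ⟨a, ha, Term.var x, ht, rfl⟩

def frontierList (ρ : TGD) : List ℕ :=
  (bodyVarsList ρ).filter fun x => decide (x ∈ ρ.headVars)

lemma mem_frontierList {ρ : TGD} {x : ℕ} : x ∈ frontierList ρ ↔ x ∈ ρ.frontier := by
  simp only [frontierList, List.mem_filter, mem_bodyVarsList, decide_eq_true_eq]
  exact Iff.rfl

def nullsAt (cs : ChaseSeq S D) (i : ℕ) : Set ℕ := {n | ∃ st v, IntroducedAt cs n i st v}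

lemma nullsAt_finite (cs : ChaseSeq S D) (i : ℕ) : (nullsAt cs i).Finite := by
  cases hstep : cs.step i with
  | none =>
    convert Set.finite_empty
    ext n
    simp only [nullsAt, Set.mem_setOf_eq, Set.mem_empty_iff_false, iff_false]
    rintro ⟨st, v, h1, -, -⟩
    rw [hstep] at h1; cases h1
  | some st =>
    apply Set.Finite.subset ((exVars_finite st.rule).image (fun v => nullIdxT (st.mx v)))
    rintro n ⟨st', v, h1, h2, h3⟩
    rw [hstep] at h1
    obtain rfl : st = st' := Option.some.inj h1
    refine ⟨v, h2, ?_⟩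
    show nullIdxT (st.mx v) = n
    rw [h3]
    rfl

/-- Step `j` introduced a null used as a frontier value at step `i`. -/
def PredStep (cs : ChaseSeq S D) (j i : ℕ) : Prop :=
  ∃ st, cs.step i = some st ∧ ∃ m y, y ∈ st.rule.frontier ∧ st.m y = Term.null m ∧
    ∃ st' v', IntroducedAt cs m j st' v'

def dep (cs : ChaseSeq S D) : ℕ → ℕ
  | i => (Finset.range i).attach.sup fun j =>
      if PredStep cs j.1 i then dep cs j.1 + 1 else 0
termination_by i => i
decreasing_by exact Finset.mem_range.1 j.2

lemma dep_def (cs : ChaseSeq S D) (i : ℕ) :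
    dep cs i = (Finset.range i).attach.sup fun j =>
      if PredStep cs j.1 i then dep cs j.1 + 1 else 0 := by
  conv_lhs => rw [dep]

lemma dep_lt (cs : ChaseSeq S D) {j i : ℕ} (h : PredStep cs j i) (hji : j < i) :
    dep cs j + 1 ≤ dep cs i := by
  have hm : (⟨j, Finset.mem_range.2 hji⟩ : {x // x ∈ Finset.range i})
      ∈ (Finset.range i).attach := Finset.mem_attach _ _
  have hle := Finset.le_sup (f := fun j' : {x // x ∈ Finset.range i} =>
    if PredStep cs j'.1 i then dep cs j'.1 + 1 else 0) hm
  rw [dep_def cs i]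
  refine le_trans ?_ hle
  exact le_of_eq (if_pos h).symm

lemma dep_attained (cs : ChaseSeq S D) {i : ℕ} (h : 0 < dep cs i) :
    ∃ j, j < i ∧ PredStep cs j i ∧ dep cs j + 1 = dep cs i := by
  have hne : (Finset.range i).attach.Nonempty := by
    rcases Nat.eq_zero_or_pos i with rfl | hi
    · rw [dep_def cs 0] at h; simp at h
    · exact Finset.attach_nonempty_iff.2 (Finset.nonempty_range_iff.2 (Nat.pos_iff_ne_zero.1 hi))
  obtain ⟨j, hj, hsup⟩ := Finset.exists_mem_eq_sup _ hne
    (fun j : {x // x ∈ Finset.range i} => if PredStep cs j.1 i then dep cs j.1 + 1 else 0)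
  by_cases hp : PredStep cs j.1 i
  · exact ⟨j.1, Finset.mem_range.1 j.2, hp, by rw [dep_def cs i, hsup, if_pos hp]⟩
  · exfalso
    rw [dep_def cs i, hsup, if_neg hp] at h
    exact lt_irrefl 0 h

def introStep (cs : ChaseSeq S D) (n : ℕ) : ℕ := sInf {i | ∃ st v, IntroducedAt cs n i st v}

lemma introStep_eq (cs : ChaseSeq S D) {n i : ℕ} {st : Step} {v : ℕ}
    (h : IntroducedAt cs n i st v) : introStep cs n = i := by
  have hne : {i' | ∃ st v, IntroducedAt cs n i' st v}.Nonempty := ⟨i, st, v, h⟩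
  obtain ⟨st', v', h'⟩ := Nat.sInf_mem hne
  exact intro_unique cs h' h

def depth (cs : ChaseSeq S D) (n : ℕ) : ℕ := dep cs (introStep cs n)

lemma pred_lt (cs : ChaseSeq S D) {i j : ℕ} {st st' : Step} {y m v' : ℕ}
    (hst : cs.step i = some st) (hy : y ∈ st.rule.frontier) (hm : st.m y = Term.null m)
    (hintro : IntroducedAt cs m j st' v') : j < i := by
  have h1 : Term.null m ∈ termsOf (cs.seq i) := hm ▸ m_mem_terms cs hst hy.1
  by_contra hle
  push_neg at hle
  exact intro_not_before cs hintro (termsOf_mono (seq_mono cs hle) h1)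

lemma depth_le_finite (cs : ChaseSeq S D) (hD : D.Finite) :
    ∀ d, {n | IntroN cs n ∧ depth cs n ≤ d}.Finite := by
  intro d
  induction d using Nat.strong_induction_on with
  | _ d ih =>
  have hlt : {m | IntroN cs m ∧ depth cs m < d}.Finite := by
    cases d with
    | zero =>
      convert Set.finite_empty
      ext m; simp
    | succ e =>
      apply Set.Finite.subset (ih e (Nat.lt_succ_self e))
      exact fun m hm => ⟨hm.1, Nat.lt_succ_iff.1 hm.2⟩
  set Tf : Set Term := Pool S D ∪ Term.null '' {m | IntroN cs m ∧ depth cs m < d} with hTfdef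
  have hTfin : Tf.Finite := (pool_finite hD).union (hlt.image _)
  set K : ℕ := S.sup fun ρ => (frontierList ρ).length with hKdef
  set SS : Set ℕ := {i | ∃ st, cs.step i = some st ∧ st.rule ∈ S ∧
    ∀ y ∈ st.rule.frontier, st.m y ∈ Tf} with hSSdef
  have hSS : SS.Finite := by
    set F : ℕ → TGD × List Term := fun i => match cs.step i with
      | some st => (st.rule, (frontierList st.rule).map st.m)
      | none => (⟨∅, ∅⟩, []) with hFdef
    apply Set.Finite.of_finite_image (f := F)
    · apply Set.Finite.subset (S.finite_toSet.prod (lists_finite hTfin K))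
      rintro p ⟨i, hi, rfl⟩
      obtain ⟨st, hst, hSmem, hfr⟩ := hi
      have hFi : F i = (st.rule, (frontierList st.rule).map st.m) := by
        simp [hFdef, hst]
      rw [hFi]
      refine ⟨hSmem, ?_, ?_⟩
      · simp only [List.length_map, Set.mem_setOf_eq]
        exact Finset.le_sup (f := fun ρ => (frontierList ρ).length) hSmem
      · rintro t ht
        obtain ⟨y, hy, rfl⟩ := List.mem_map.1 ht
        exact hfr y (mem_frontierList.1 hy)
    · rintro i hi j hj hF
      obtain ⟨st, hsti, hSi, hfri⟩ := hi
      obtain ⟨st', hstj, hSj, hfrj⟩ := hj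
      by_contra hne
      have hFi : F i = (st.rule, (frontierList st.rule).map st.m) := by simp [hFdef, hsti]
      have hFj : F j = (st'.rule, (frontierList st'.rule).map st'.m) := by simp [hFdef, hstj]
      rw [hFi, hFj] at hF
      have hr : st.rule = st'.rule := congrArg Prod.fst hF
      have hl : (frontierList st.rule).map st.m = (frontierList st.rule).map st'.m := by
        have := congrArg Prod.snd hF
        simp only at this
        rw [← hr] at this
        exact this
      have hagree : ∀ y ∈ st.rule.frontier, st.m y = st'.m y :=
        fun y hy => List.map_inj_left.1 hl y (mem_frontierList.2 hy)
      rcases Nat.lt_or_ge i j with hij | hij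
      · exact no_refire cs hsti hstj hij hr hagree
      · rcases Nat.lt_or_ge j i with hji | hji
        · refine no_refire cs hstj hsti hji hr.symm ?_
          intro y hy
          have hy' : y ∈ st.rule.frontier := by rw [hr]; exact hy
          exact (hagree y hy').symm
        · exact hne (le_antisymm hji hij)
  apply Set.Finite.subset (hSS.biUnion fun i _ => nullsAt_finite cs i)
  rintro n ⟨⟨i, st, v, hintro⟩, hdle⟩
  have hrS : st.rule ∈ S := (cs.app i st hintro.1).1
  refine Set.mem_biUnion (?_ : i ∈ SS) ⟨st, v, hintro⟩
  refine ⟨st, hintro.1, hrS, ?_⟩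
  intro y hy
  have hterm : st.m y ∈ termsOf (cs.seq i) := m_mem_terms cs hintro.1 hy.1
  rcases terms_class cs i _ hterm with hp | ⟨m, hm, j, hji, st', v', hI⟩
  · exact Or.inl hp
  · right
    refine ⟨m, ⟨⟨j, st', v', hI⟩, ?_⟩, hm.symm⟩
    have hps : PredStep cs j i := ⟨st, hintro.1, m, y, hy, hm, st', v', hI⟩
    have hle := dep_lt cs hps hji
    have hdn : depth cs n = dep cs i := by rw [depth, introStep_eq cs hintro]
    have hdm : depth cs m = dep cs j := by rw [depth, introStep_eq cs hI]
    omega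

lemma exists_depth_eq (cs : ChaseSeq S D) :
    ∀ dn, ∀ n, IntroN cs n → depth cs n = dn → ∀ d ≤ dn,
      ∃ m, IntroN cs m ∧ depth cs m = d := by
  intro dn
  induction dn using Nat.strong_induction_on with
  | _ dn ih =>
  intro n hn hdn d hd
  rcases eq_or_lt_of_le hd with rfl | hlt
  · exact ⟨n, hn, hdn⟩
  · obtain ⟨i, st, v, hI⟩ := hn
    have hstep : depth cs n = dep cs i := by rw [depth, introStep_eq cs hI]
    have hpos : 0 < dep cs i := by omega
    obtain ⟨j, hji, hps, hdj⟩ := dep_attained cs hpos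
    obtain ⟨st0, hst0, m, y, hy, hm, st', v', hI'⟩ := hps
    have hmN : IntroN cs m := ⟨j, st', v', hI'⟩
    have hdm : depth cs m = dn - 1 := by rw [depth, introStep_eq cs hI']; omega
    exact ih (dn - 1) (by omega) m hmN hdm d (by omega)

lemma T_pred (cs : ChaseSeq S D) {n d : ℕ} (hn : IntroN cs n) (hd : depth cs n = d + 1) :
    ∃ m, (IntroN cs m ∧ depth cs m = d) ∧ ∃ y, ChaseEdge cs (Term.null m) y n := by
  obtain ⟨i, st, v, hI⟩ := hn
  have hstep : depth cs n = dep cs i := by rw [depth, introStep_eq cs hI]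
  obtain ⟨j, hji, hps, hdj⟩ := dep_attained cs (i := i) (by omega)
  obtain ⟨st0, hst0, m, y, hy, hm, st', v', hI'⟩ := hps
  have hst0' : st0 = st := by
    rw [hI.1] at hst0
    exact (Option.some.inj hst0).symm
  subst hst0'
  refine ⟨m, ⟨⟨j, st', v', hI'⟩, ?_⟩, y, i, st0, v, hI, hy, hm⟩
  rw [depth, introStep_eq cs hI']
  omega

lemma introN_infinite (cs : ChaseSeq S D) (hD : D.Finite) (hinf : ¬ (chase cs).Finite) :
    {n | IntroN cs n}.Infinite := by
  by_contra h
  rw [Set.not_infinite] at h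
  apply hinf
  set Tall : Set Term := Pool S D ∪ Term.null '' {n | IntroN cs n} with hTall
  have hTallF : Tall.Finite := (pool_finite hD).union (h.image _)
  have hsub : chase cs ⊆ ⋃ a₀ ∈ AtomPool S D,
      (fun l => Atom.mk a₀.pred l) ''
        {l : List Term | l.length ≤ a₀.args.length ∧ ∀ t ∈ l, t ∈ Tall} := by
    intro a ha
    rw [chase, Set.mem_iUnion] at ha
    obtain ⟨i, ha⟩ := ha
    obtain ⟨a₀, ha₀, hpred, hlen⟩ := atom_shape cs i a ha
    refine Set.mem_biUnion ha₀ ⟨a.args, ⟨le_of_eq hlen, ?_⟩, ?_⟩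
    · intro t ht
      rcases terms_class cs i t ⟨a, ha, ht⟩ with hp | ⟨n, rfl, j, hj, st, v, hI⟩
      · exact Or.inl hp
      · exact Or.inr ⟨n, ⟨j, st, v, hI⟩, rfl⟩
    · show Atom.mk a₀.pred a.args = a
      cases a with
      | mk p l =>
        simp only at hpred
        exact congrArg (fun q => Atom.mk q l) hpred.symm
  exact Set.Finite.subset ((atomPool_finite hD).biUnion
    (fun a₀ _ => ((lists_finite hTallF a₀.args.length).image _))) hsub

/-! ### An abstract Koenig-style lemma -/

lemma pigeon {A : Set ℕ} (hA : A.Finite) {P : ℕ → ℕ → Prop}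
    (h : ∀ k, ∃ x ∈ A, P k x) : ∃ x ∈ A, ∀ k, ∃ k', k ≤ k' ∧ P k' x := by
  choose c hc hP using h
  have hex : ∃ x ∈ A, {k | c k = x}.Infinite := by
    by_contra hcon
    push_neg at hcon
    have huniv : (Set.univ : Set ℕ).Finite := by
      apply Set.Finite.subset (hA.biUnion fun x hx => hcon x hx)
      intro k _
      exact Set.mem_biUnion (hc k) rfl
    exact Set.infinite_univ huniv
  obtain ⟨x, hxA, hxi⟩ := hex
  refine ⟨x, hxA, fun k => ?_⟩
  obtain ⟨k', hk', hgt⟩ := hxi.exists_gt k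
  exact ⟨k', le_of_lt hgt, hk' ▸ hP k'⟩

lemma chain_to (T : ℕ → Set ℕ) (R : ℕ → ℕ → Prop)
    (hpred : ∀ d, ∀ n ∈ T (d + 1), ∃ m ∈ T d, R m n) :
    ∀ k, ∀ z ∈ T k, ∃ g : ℕ → ℕ, g k = z ∧ (∀ i ≤ k, g i ∈ T i) ∧
      ∀ i < k, R (g i) (g (i + 1)) := by
  intro k
  induction k with
  | zero =>
    intro z hz
    refine ⟨fun _ => z, rfl, ?_, ?_⟩
    · intro i hi
      obtain rfl : i = 0 := Nat.le_zero.1 hi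
      exact hz
    · intro i hi; omega
  | succ k ih =>
    intro z hz
    obtain ⟨m, hm, hR⟩ := hpred k z hz
    obtain ⟨g, hgk, hgT, hgR⟩ := ih m hm
    refine ⟨fun i => if i ≤ k then g i else z, ?_, ?_, ?_⟩
    · simp only [if_neg (by omega : ¬ k + 1 ≤ k)]
    · intro i hi
      by_cases hik : i ≤ k
      · simpa [if_pos hik] using hgT i hik
      · obtain rfl : i = k + 1 := by omega
        simpa [if_neg hik] using hz
    · intro i hi
      by_cases hik : i < k
      · simp only [if_pos (le_of_lt hik), if_pos (Nat.succ_le_of_lt hik)]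
        exact hgR i hik
      · obtain rfl : i = k := by omega
        simp only [if_pos (le_refl i), if_neg (by omega : ¬ i + 1 ≤ i)]
        rw [hgk]
        exact hR

def GoodChain (T : ℕ → Set ℕ) (R : ℕ → ℕ → Prop) (d k x : ℕ) : Prop :=
  ∃ g : ℕ → ℕ, g 0 = x ∧ (∀ i ≤ k, g i ∈ T (d + i)) ∧ ∀ i < k, R (g i) (g (i + 1))

def Good (T : ℕ → Set ℕ) (R : ℕ → ℕ → Prop) (d x : ℕ) : Prop :=
  x ∈ T d ∧ ∀ k, GoodChain T R d k x

lemma goodChain_mono {T : ℕ → Set ℕ} {R : ℕ → ℕ → Prop} {d k k' x : ℕ}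
    (h : GoodChain T R d k' x) (hk : k ≤ k') : GoodChain T R d k x := by
  obtain ⟨g, h0, hT, hR⟩ := h
  exact ⟨g, h0, fun i hi => hT i (le_trans hi hk), fun i hi => hR i (lt_of_lt_of_le hi hk)⟩

lemma good_zero (T : ℕ → Set ℕ) (R : ℕ → ℕ → Prop)
    (hfin : ∀ d, (T d).Finite) (hne : ∀ d, (T d).Nonempty)
    (hpred : ∀ d, ∀ n ∈ T (d + 1), ∃ m ∈ T d, R m n) : ∃ x, Good T R 0 x := by
  have h : ∀ k, ∃ x ∈ T 0, GoodChain T R 0 k x := by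
    intro k
    obtain ⟨z, hz⟩ := hne k
    obtain ⟨g, hgk, hgT, hgR⟩ := chain_to T R hpred k z hz
    refine ⟨g 0, hgT 0 (Nat.zero_le k), g, rfl, fun i hi => ?_, hgR⟩
    rw [Nat.zero_add]
    exact hgT i hi
  obtain ⟨x, hx, hk⟩ := pigeon (hfin 0) h
  refine ⟨x, hx, fun k => ?_⟩
  obtain ⟨k', hkk', hP⟩ := hk k
  exact goodChain_mono hP hkk'

lemma good_succ {T : ℕ → Set ℕ} {R : ℕ → ℕ → Prop}
    (hfin : ∀ d, (T d).Finite) {d x : ℕ} (hgood : Good T R d x) :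
    ∃ y, R x y ∧ Good T R (d + 1) y := by
  have h : ∀ k, ∃ y ∈ T (d + 1), R x y ∧ GoodChain T R (d + 1) k y := by
    intro k
    obtain ⟨g, h0, hT, hR⟩ := hgood.2 (k + 1)
    refine ⟨g 1, hT 1 (by omega), ?_, ?_⟩
    · have := hR 0 (by omega)
      rwa [h0] at this
    · refine ⟨fun i => g (i + 1), rfl, fun i hi => ?_, fun i hi => hR (i + 1) (by omega)⟩
      have hTi := hT (i + 1) (by omega)
      have he : d + (i + 1) = (d + 1) + i := by omega
      rwa [he] at hTi
  obtain ⟨y, hy, hk⟩ := pigeon (hfin (d + 1)) h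
  have hRxy : R x y := by
    obtain ⟨k', -, hP⟩ := hk 0
    exact hP.1
  refine ⟨y, hRxy, hy, fun k => ?_⟩
  obtain ⟨k', hkk', hP⟩ := hk k
  exact goodChain_mono hP.2 hkk'

lemma koenig (T : ℕ → Set ℕ) (R : ℕ → ℕ → Prop)
    (hfin : ∀ d, (T d).Finite) (hne : ∀ d, (T d).Nonempty)
    (hpred : ∀ d, ∀ n ∈ T (d + 1), ∃ m ∈ T d, R m n) :
    ∃ f : ℕ → ℕ, ∀ d, R (f d) (f (d + 1)) := by
  obtain ⟨x0, hx0⟩ := good_zero T R hfin hne hpred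
  have hstep : ∀ d x, Good T R d x → ∃ y, R x y ∧ Good T R (d + 1) y :=
    fun d x h => good_succ hfin h
  choose nxt hnxt1 hnxt2 using hstep
  let F : ∀ d : ℕ, {x : ℕ // Good T R d x} := fun d =>
    Nat.rec (motive := fun d => {x : ℕ // Good T R d x}) ⟨x0, hx0⟩
      (fun d p => ⟨nxt d p.1 p.2, hnxt2 d p.1 p.2⟩) d
  refine ⟨fun d => (F d).1, fun d => ?_⟩
  show R (F d).1 (F (d + 1)).1
  exact hnxt1 d (F d).1 (F d).2

end Statement1Aux


/-- if `Chase(Σ,D)` is infinite, then it contains an infinite chain of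
chase edges `n₀ →_{y₁} n₁ →_{y₂} n₂ →_{y₃} ⋯` between nulls. -/
theorem statement1 (S : Finset TGD) (D : Set Atom) (hD : IsDatabase D)
    (cs : ChaseSeq S D) (hinf : ¬ (chase cs).Finite) :
    ∃ n : ℕ → ℕ, ∃ y : ℕ → ℕ,
      ∀ i : ℕ, ChaseEdge cs (Term.null (n i)) (y (i + 1)) (n (i + 1)) := by
  classical
  have hD' : D.Finite := hD.1
  have hIN := introN_infinite cs hD' hinf
  set T : ℕ → Set ℕ := fun d => {n | IntroN cs n ∧ depth cs n = d} with hT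
  have hfin : ∀ d, (T d).Finite := fun d =>
    (depth_le_finite cs hD' d).subset (fun n hn => ⟨hn.1, le_of_eq hn.2⟩)
  have hne : ∀ d, (T d).Nonempty := by
    intro d
    obtain ⟨n, hn, hdgt⟩ : ∃ n, IntroN cs n ∧ ¬ depth cs n ≤ d := by
      by_contra hcon
      push_neg at hcon
      exact hIN ((depth_le_finite cs hD' d).subset fun n hn => ⟨hn, hcon n hn⟩)
    obtain ⟨m, hm1, hm2⟩ :=
      exists_depth_eq cs (depth cs n) n hn rfl d (by omega)
    exact ⟨m, hm1, hm2⟩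
  have hpred : ∀ d, ∀ n ∈ T (d + 1), ∃ m ∈ T d,
      (∃ y, ChaseEdge cs (Term.null m) y n) := by
    intro d n hn
    obtain ⟨m, hm, hy⟩ := T_pred cs hn.1 hn.2
    exact ⟨m, hm, hy⟩
  obtain ⟨f, hf⟩ := koenig T (fun m n => ∃ y, ChaseEdge cs (Term.null m) y n) hfin hne hpred
  choose Y hY using hf
  refine ⟨f, fun i => Y (i - 1), fun i => ?_⟩
  simpa using hY i

end ChasePaper
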